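/- arXiv:1006.1256 — 2 statements merged into one kernel-verified Lean document; each statement's English description precedes it below -/
import Mathlib

section
/- Let (u_k) be an orthonormal basis of L²(Ω) of Laplace eigenfunctions with eigenvalues λ_k satisfying λ_k ≤ C k^{2/n}, and let Q̃_N(x,y) = N^{-1} Σ_{k=1}^N u_k(x + N^{-1/n}y) conj(u_k)(x). Then for each x ∈ Ω, each integer m ≥ 0, and each R > 0 with x + 2N^{-1/n}B_R ⊂ Ω, one has ∫_{B_{2R}} |Δ_y^m Q̃_N(x,y)|² dy ≤ C(m) N^{-1} Σ_{k=1}^N |u_k(x)|², where C(m) depends only on C and m. -/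
open Real MeasureTheory

/-- The Laplacian of a complex-valued function on `ℝⁿ`. -/
noncomputable def lapC (n : ℕ) (f : EuclideanSpace ℝ (Fin n) → ℂ)
    (x : EuclideanSpace ℝ (Fin n)) : ℂ :=
  ∑ i : Fin n, fderiv ℝ (fun y => fderiv ℝ f y (EuclideanSpace.single i 1)) x
    (EuclideanSpace.single i 1)

lemma lapC_congr {n : ℕ} {f g : EuclideanSpace ℝ (Fin n) → ℂ}
    {y : EuclideanSpace ℝ (Fin n)} (h : f =ᶠ[nhds y] g) : lapC n f y = lapC n g y := by
  unfold lapC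
  refine Finset.sum_congr rfl fun i _ => ?_
  have h2 : (fun z => fderiv ℝ f z (EuclideanSpace.single i 1))
      =ᶠ[nhds y] (fun z => fderiv ℝ g z (EuclideanSpace.single i 1)) :=
    (Filter.EventuallyEq.fderiv (𝕜 := ℝ) h).mono fun z hz => congrArg (fun L : _ →L[ℝ] ℂ => L (EuclideanSpace.single i 1)) hz
  rw [h2.fderiv_eq]

lemma lapC_comp_affine {n : ℕ} {U : Set (EuclideanSpace ℝ (Fin n))} (hU : IsOpen U)
    {f : EuclideanSpace ℝ (Fin n) → ℂ} (hf : ContDiffOn ℝ (⊤ : ℕ∞) f U)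
    (x : EuclideanSpace ℝ (Fin n)) (s : ℝ) {y : EuclideanSpace ℝ (Fin n)}
    (hy : x + s • y ∈ U) :
    lapC n (fun y' => f (x + s • y')) y = ((s : ℂ))^2 * lapC n f (x + s • y) := by
  classical
  set A : EuclideanSpace ℝ (Fin n) → EuclideanSpace ℝ (Fin n) := fun y' => x + s • y' with hA_def
  have hA : ∀ z, HasFDerivAt A (s • ContinuousLinearMap.id ℝ (EuclideanSpace ℝ (Fin n))) z :=
    fun z => ((hasFDerivAt_id z).const_smul s).const_add x
  have hV : IsOpen (A ⁻¹' U) := hU.preimage (by fun_prop)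
  have hyV : y ∈ A ⁻¹' U := hy
  have hf' : ContDiffOn ℝ (⊤ : ℕ∞) (fderiv ℝ f) U := hf.fderiv_of_isOpen hU (by simp)
  unfold lapC
  rw [Finset.mul_sum]
  refine Finset.sum_congr rfl fun i _ => ?_
  set v : EuclideanSpace ℝ (Fin n) := EuclideanSpace.single i 1 with hv_def
  set ψ : EuclideanSpace ℝ (Fin n) → ℂ := fun z => fderiv ℝ f z v with hψ_def
  have hψdiff : DifferentiableAt ℝ ψ (A y) :=
    (ContinuousLinearMap.apply ℝ ℂ v).differentiableAt.comp (A y)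
      ((hf'.differentiableOn (by simp)).differentiableAt (hU.mem_nhds hy))
  have e1 : (fun z => fderiv ℝ (fun y' => f (A y')) z v)
      =ᶠ[nhds y] (fun z => s • ψ (A z)) := by
    filter_upwards [hV.mem_nhds hyV] with z hz
    have hdf : DifferentiableAt ℝ f (A z) :=
      (hf.differentiableOn (by simp)).differentiableAt (hU.mem_nhds hz)
    have := (hdf.hasFDerivAt.comp z (hA z)).fderiv
    rw [show (fun y' => f (A y')) = f ∘ A from rfl, this]
    simp [ψ, ContinuousLinearMap.comp_apply, _root_.map_smul]
  rw [e1.fderiv_eq]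
  have hψA : DifferentiableAt ℝ (fun z => ψ (A z)) y :=
    hψdiff.comp y (hA y).differentiableAt
  rw [fderiv_fun_const_smul hψA s]
  have := (hψdiff.hasFDerivAt.comp y (hA y)).fderiv
  rw [show (fun z => ψ (A z)) = ψ ∘ A from rfl, this]
  simp only [ContinuousLinearMap.smul_apply, ContinuousLinearMap.coe_comp', Function.comp_apply,
    ContinuousLinearMap.coe_smul', Pi.smul_apply, ContinuousLinearMap.coe_id', id_eq]
  have hAy : A y = x + s • y := rfl
  rw [ContinuousLinearMap.map_smul, hAy]
  simp only [Complex.real_smul]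
  ring

lemma lapC_sum {n : ℕ} {U : Set (EuclideanSpace ℝ (Fin n))} (hU : IsOpen U)
    {ι : Type*} (t : Finset ι) (a : ι → ℂ) (g : ι → EuclideanSpace ℝ (Fin n) → ℂ)
    (hg : ∀ i ∈ t, ContDiffOn ℝ (⊤ : ℕ∞) (g i) U) {y : EuclideanSpace ℝ (Fin n)} (hy : y ∈ U) :
    lapC n (fun y' => ∑ i ∈ t, a i * g i y') y = ∑ i ∈ t, a i * lapC n (g i) y := by
  classical
  have hgd : ∀ i ∈ t, ∀ z ∈ U, DifferentiableAt ℝ (g i) z := fun i hi z hz =>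
    ((hg i hi).differentiableOn (by simp)).differentiableAt (hU.mem_nhds hz)
  have main : ∀ j : Fin n,
      fderiv ℝ (fun z => fderiv ℝ (fun y' => ∑ i ∈ t, a i * g i y') z
          (EuclideanSpace.single j 1)) y (EuclideanSpace.single j 1)
      = ∑ i ∈ t, a i * fderiv ℝ (fun z => fderiv ℝ (g i) z (EuclideanSpace.single j 1)) y
          (EuclideanSpace.single j 1) := by
    intro j
    set v := (EuclideanSpace.single j 1 : EuclideanSpace ℝ (Fin n)) with hv
    have e1 : (fun z => fderiv ℝ (fun y' => ∑ i ∈ t, a i * g i y') z v) =ᶠ[nhds y]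
        (fun z => ∑ i ∈ t, a i * fderiv ℝ (g i) z v) := by
      filter_upwards [hU.mem_nhds hy] with z hz
      rw [fderiv_fun_sum (fun i hi => ((hgd i hi z hz).const_mul (a i)))]
      rw [ContinuousLinearMap.sum_apply]
      refine Finset.sum_congr rfl fun i hi => ?_
      rw [fderiv_const_mul (hgd i hi z hz) (a i)]
      simp [smul_eq_mul]
    rw [e1.fderiv_eq]
    have hψ : ∀ i ∈ t, DifferentiableAt ℝ (fun z => fderiv ℝ (g i) z v) y := fun i hi =>
      (ContinuousLinearMap.apply ℝ ℂ v).differentiableAt.comp y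
        ((((hg i hi).fderiv_of_isOpen hU (by simp) : ContDiffOn ℝ (⊤ : ℕ∞) _ U).differentiableOn (by simp)).differentiableAt
          (hU.mem_nhds hy))
    rw [fderiv_fun_sum (fun i hi => (hψ i hi).const_mul (a i))]
    rw [ContinuousLinearMap.sum_apply]
    refine Finset.sum_congr rfl fun i hi => ?_
    rw [fderiv_const_mul (hψ i hi) (a i)]
    simp [smul_eq_mul]
  unfold lapC
  calc ∑ j : Fin n, fderiv ℝ (fun z => fderiv ℝ (fun y' => ∑ i ∈ t, a i * g i y') z
          (EuclideanSpace.single j 1)) y (EuclideanSpace.single j 1)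
      = ∑ j : Fin n, ∑ i ∈ t, a i * fderiv ℝ (fun z => fderiv ℝ (g i) z
          (EuclideanSpace.single j 1)) y (EuclideanSpace.single j 1) :=
        Finset.sum_congr rfl fun j _ => main j
    _ = ∑ i ∈ t, a i * ∑ j : Fin n, fderiv ℝ (fun z => fderiv ℝ (g i) z
          (EuclideanSpace.single j 1)) y (EuclideanSpace.single j 1) := by
        rw [Finset.sum_comm]
        simp [Finset.mul_sum]

/-- Derivative bound for the rescaled one-body matrix
`Q̃_N(x,y) = N⁻¹ Σ_{k<N} u_k(x + N^{-1/n}y) conj(u_k)(x)`: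
`∫_{B_{2R}} |Δ_y^m Q̃_N(x,y)|² dy ≤ C(m) N⁻¹ Σ_{k<N} |u_k(x)|²`,
with `C(m)` depending only on `C` and `m`. -/
theorem derivative_bound_oneBodyMatrix (C : ℝ) (hC : 0 < C) (m : ℕ) :
    ∃ C' : ℝ, 0 < C' ∧
      ∀ (n : ℕ), 1 ≤ n →
      ∀ (Ω : Set (EuclideanSpace ℝ (Fin n))), IsOpen Ω → Bornology.IsBounded Ω →
      ∀ (u : ℕ → EuclideanSpace ℝ (Fin n) → ℂ) (lam : ℕ → ℝ),
        (∀ k, ContDiffOn ℝ (⊤ : ℕ∞) (u k) Ω) →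
        (∀ k x, x ∉ Ω → u k x = 0) →
        (∀ j k, ∫ x in Ω, u j x * (starRingEnd ℂ) (u k x) = if j = k then 1 else 0) →
        (∀ k x, x ∈ Ω → lapC n (u k) x = -((lam k : ℂ) * u k x)) →
        (∀ k, 0 < lam k) →
        (∀ k : ℕ, lam k ≤ C * ((k : ℝ) + 1) ^ ((2 : ℝ) / n)) →
        ∀ (N : ℕ), 1 ≤ N → ∀ x ∈ Ω, ∀ R : ℝ, 0 < R →
          (∀ y : EuclideanSpace ℝ (Fin n), ‖y‖ < 2 * R →
            x + ((N : ℝ) ^ (-(1 : ℝ) / n)) • y ∈ Ω) →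
          ∫ y in Metric.ball (0 : EuclideanSpace ℝ (Fin n)) (2 * R),
              ‖(lapC n)^[m]
                  (fun y' => (N : ℂ)⁻¹ * ∑ k ∈ Finset.range N,
                    u k (x + ((N : ℝ) ^ (-(1 : ℝ) / n)) • y') * (starRingEnd ℂ) (u k x)) y‖ ^ 2
            ≤ C' * ((N : ℝ)⁻¹ * ∑ k ∈ Finset.range N, ‖u k x‖ ^ 2) := by
  classical
  refine ⟨C ^ (2*m), by positivity, ?_⟩
  intro n hn Ω hΩ _hbd u lam hu hzero horth heig hlampos hlam N hN x hx R hR hball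
  have hn0 : (n : ℝ) ≠ 0 := by
    have : (1:ℝ) ≤ n := by exact_mod_cast hn
    linarith
  have hNpos : (0:ℝ) < N := by
    have : (1:ℝ) ≤ N := by exact_mod_cast hN
    linarith
  set s : ℝ := (N : ℝ) ^ (-(1:ℝ)/n) with hs_def
  have hs : 0 < s := Real.rpow_pos_of_pos hNpos _
  set A : EuclideanSpace ℝ (Fin n) → EuclideanSpace ℝ (Fin n) := fun y' => x + s • y'
    with hA_def
  set V : Set (EuclideanSpace ℝ (Fin n)) := A ⁻¹' Ω with hV_def
  have hVopen : IsOpen V := hΩ.preimage (by fun_prop)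
  set ν : ℕ → ℂ := fun k => -(((s^2 * lam k : ℝ) : ℂ)) with hν_def
  have hAcd : ContDiff ℝ (⊤ : ℕ∞) A := by fun_prop
  have hhk : ∀ k, ContDiffOn ℝ (⊤ : ℕ∞) (fun y' => u k (A y')) V := fun k =>
    (hu k).comp hAcd.contDiffOn (fun z hz => hz)
  set Q : EuclideanSpace ℝ (Fin n) → ℂ := fun y' =>
    (N:ℂ)⁻¹ * ∑ k ∈ Finset.range N, u k (x + s • y') * (starRingEnd ℂ) (u k x) with hQ_def
  -- the key derivative formula
  have key : ∀ (M : ℕ) (y : EuclideanSpace ℝ (Fin n)), y ∈ V →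
      (lapC n)^[M] Q y = (N:ℂ)⁻¹ * ∑ k ∈ Finset.range N,
        (ν k)^M * (u k (A y) * (starRingEnd ℂ) (u k x)) := by
    intro M
    induction M with
    | zero => intro y hy; simp [Q, A]
    | succ M ih =>
      intro y hy
      rw [Function.iterate_succ_apply']
      have e1 : (lapC n)^[M] Q =ᶠ[nhds y] (fun y' => ∑ k ∈ Finset.range N,
          ((N:ℂ)⁻¹ * (ν k)^M * (starRingEnd ℂ) (u k x)) * u k (A y')) := by
        filter_upwards [hVopen.mem_nhds hy] with z hz
        rw [ih z hz, Finset.mul_sum]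
        exact Finset.sum_congr rfl fun k _ => by ring
      rw [lapC_congr e1]
      rw [lapC_sum hVopen (Finset.range N)
        (fun k => (N:ℂ)⁻¹ * (ν k)^M * (starRingEnd ℂ) (u k x))
        (fun k y' => u k (A y')) (fun k _ => hhk k) hy]
      rw [Finset.mul_sum]
      refine Finset.sum_congr rfl fun k hk => ?_
      have hlap : lapC n (fun y' => u k (A y')) y = ((s:ℂ))^2 * lapC n (u k) (x + s • y) :=
        lapC_comp_affine hΩ (hu k) x s hy
      have hAy : A y = x + s • y := rfl
      rw [hlap, heig k (x + s • y) hy, hAy]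
      simp only [ν]
      push_cast
      ring
  -- the function F and its properties
  set c : ℕ → ℂ := fun k => (N:ℂ)⁻¹ * (ν k)^m * (starRingEnd ℂ) (u k x) with hc_def
  set F : EuclideanSpace ℝ (Fin n) → ℂ := fun z => ∑ k ∈ Finset.range N, c k * u k z
    with hF_def
  have hQF : ∀ y ∈ V, (lapC n)^[m] Q y = F (A y) := by
    intro y hy
    rw [key m y hy]
    simp only [F]
    rw [Finset.mul_sum]
    exact Finset.sum_congr rfl fun k _ => by simp only [c]; ring
  have hBV : Metric.ball (0 : EuclideanSpace ℝ (Fin n)) (2*R) ⊆ V := by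
    intro y hy
    exact hball y (by simpa using mem_ball_zero_iff.1 hy)
  -- measurability and integrability
  have hmeas : ∀ k, AEStronglyMeasurable (u k) (volume.restrict Ω) := fun k =>
    ((hu k).continuousOn).aestronglyMeasurable hΩ.measurableSet
  have hmeas' : ∀ j k, AEStronglyMeasurable (fun z => u j z * (starRingEnd ℂ) (u k z))
      (volume.restrict Ω) := by
    intro j k
    exact (hmeas j).mul (continuous_star.comp_aestronglyMeasurable (hmeas k))
  have hdiag : ∀ k, Integrable (fun z => u k z * (starRingEnd ℂ) (u k z))
      (volume.restrict Ω) := by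
    intro k
    by_contra hcon
    have h0 := horth k k
    rw [integral_undef hcon] at h0
    simp at h0
  have hnormsq : ∀ k, Integrable (fun z => ‖u k z‖^2) (volume.restrict Ω) := by
    intro k
    refine ((hdiag k).re).congr ?_
    filter_upwards with z
    have : (u k z * (starRingEnd ℂ) (u k z)).re = ‖u k z‖^2 := by
      rw [Complex.mul_conj]; simp [Complex.normSq_eq_norm_sq, ← Complex.ofReal_pow]
    exact this
  have hprod : ∀ j k, Integrable (fun z => u j z * (starRingEnd ℂ) (u k z))
      (volume.restrict Ω) := by
    intro j k
    refine Integrable.mono' ((hnormsq j).add (hnormsq k)) (hmeas' j k) ?_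
    filter_upwards with z
    have h1 : ‖u j z * (starRingEnd ℂ) (u k z)‖ = ‖u j z‖ * ‖u k z‖ := by
      rw [norm_mul, RCLike.norm_conj]
    rw [h1]
    simp only [Pi.add_apply]
    nlinarith [sq_nonneg (‖u j z‖ - ‖u k z‖), norm_nonneg (u j z), norm_nonneg (u k z)]
  have hFexp : ∀ z, F z * (starRingEnd ℂ) (F z) = ∑ j ∈ Finset.range N, ∑ k ∈ Finset.range N,
      (c j * (starRingEnd ℂ) (c k)) * (u j z * (starRingEnd ℂ) (u k z)) := by
    intro z
    simp only [F, map_sum, map_mul]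
    rw [Finset.sum_mul_sum]
    exact Finset.sum_congr rfl fun j _ => Finset.sum_congr rfl fun k _ => by ring
  have hFFint : Integrable (fun z => F z * (starRingEnd ℂ) (F z)) (volume.restrict Ω) := by
    rw [show (fun z => F z * (starRingEnd ℂ) (F z)) = fun z => ∑ j ∈ Finset.range N,
        ∑ k ∈ Finset.range N, (c j * (starRingEnd ℂ) (c k)) *
          (u j z * (starRingEnd ℂ) (u k z)) from funext hFexp]
    refine integrable_finset_sum _ fun j _ => integrable_finset_sum _ fun k _ => ?_
    exact (hprod j k).const_mul _
  have hre : ∀ z, ‖F z‖^2 = (F z * (starRingEnd ℂ) (F z)).re := by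
    intro z
    rw [Complex.mul_conj]; simp [Complex.normSq_eq_norm_sq, ← Complex.ofReal_pow]
  have hFint : Integrable (fun z => ‖F z‖^2) (volume.restrict Ω) := by
    refine (hFFint.re).congr ?_
    filter_upwards with z
    exact (hre z).symm
  have hFzero : ∀ z, z ∉ Ω → F z = 0 := by
    intro z hz
    exact Finset.sum_eq_zero fun k _ => by rw [hzero k z hz, mul_zero]
  have hFind : (fun z => ‖F z‖^2) = Set.indicator Ω (fun z => ‖F z‖^2) := by
    funext z
    by_cases hz : z ∈ Ω
    · rw [Set.indicator_of_mem hz]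
    · rw [Set.indicator_of_notMem hz, hFzero z hz]; simp
  have hFglob : Integrable (fun z => ‖F z‖^2) volume := by
    rw [hFind]
    exact (integrable_indicator_iff hΩ.measurableSet).2 hFint
  have hcomp : Integrable (fun y => ‖F (x + s • y)‖^2) volume := by
    have h1 : Integrable (fun w => ‖F (x + w)‖^2) volume := hFglob.comp_add_left x
    exact (integrable_comp_smul_iff volume (fun w => ‖F (x + w)‖^2) hs.ne').2 h1
  -- arithmetic facts about s
  have hsn : s ^ n = (N:ℝ)⁻¹ := by
    rw [hs_def, ← Real.rpow_natCast ((N:ℝ) ^ (-(1:ℝ)/n)) n, ← Real.rpow_mul hNpos.le,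
      show (-(1:ℝ)/n) * n = -1 by field_simp, Real.rpow_neg_one]
  have hs2 : s ^ 2 = (N:ℝ) ^ (-(2:ℝ)/n) := by
    rw [hs_def, ← Real.rpow_natCast ((N:ℝ) ^ (-(1:ℝ)/n)) 2, ← Real.rpow_mul hNpos.le]
    congr 1
    ring
  have hνC : ∀ k ∈ Finset.range N, ‖ν k‖ ≤ C := by
    intro k hk
    have hnn : 0 ≤ s^2 * lam k := mul_nonneg (sq_nonneg s) (hlampos k).le
    have hnorm : ‖ν k‖ = s^2 * lam k := by
      simp only [ν, norm_neg, Complex.norm_real]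
      exact abs_of_nonneg hnn
    rw [hnorm]
    have h2 : lam k ≤ C * (N:ℝ) ^ ((2:ℝ)/n) := by
      refine (hlam k).trans ?_
      refine mul_le_mul_of_nonneg_left ?_ hC.le
      refine Real.rpow_le_rpow (by positivity) ?_ (by positivity)
      exact_mod_cast Nat.succ_le_of_lt (Finset.mem_range.1 hk)
    calc s^2 * lam k ≤ s^2 * (C * (N:ℝ)^((2:ℝ)/n)) :=
          mul_le_mul_of_nonneg_left h2 (sq_nonneg s)
      _ = C * ((N:ℝ)^(-(2:ℝ)/n) * (N:ℝ)^((2:ℝ)/n)) := by rw [hs2]; ring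
      _ = C := by
          rw [← Real.rpow_add hNpos, show -(2:ℝ)/n + 2/n = 0 by ring, Real.rpow_zero, mul_one]
  -- the integral chain
  have step1 : ∫ y in Metric.ball (0 : EuclideanSpace ℝ (Fin n)) (2*R),
      ‖(lapC n)^[m] Q y‖^2 = ∫ y in Metric.ball (0 : EuclideanSpace ℝ (Fin n)) (2*R),
      ‖F (x + s • y)‖^2 :=
    setIntegral_congr_fun measurableSet_ball (fun y hy => by rw [hQF y (hBV hy)])
  have step2 : ∫ y in Metric.ball (0 : EuclideanSpace ℝ (Fin n)) (2*R), ‖F (x + s • y)‖^2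
      ≤ ∫ y, ‖F (x + s • y)‖^2 :=
    setIntegral_le_integral hcomp (Filter.Eventually.of_forall fun y => by positivity)
  have step3 : (∫ y, ‖F (x + s • y)‖^2) = (N:ℝ) * ∫ z in Ω, ‖F z‖^2 := by
    have h3 : (∫ y, ‖F (x + s • y)‖^2)
        = |(s ^ Module.finrank ℝ (EuclideanSpace ℝ (Fin n)))⁻¹| • ∫ w, ‖F (x + w)‖^2 :=
      Measure.integral_comp_smul volume (fun w => ‖F (x + w)‖^2) s
    have h4 : (∫ w, ‖F (x + w)‖^2) = ∫ w, ‖F w‖^2 :=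
      integral_add_left_eq_self (fun w => ‖F w‖^2) x
    have h5 : (∫ w, ‖F w‖^2) = ∫ z in Ω, ‖F z‖^2 := by
      rw [← integral_indicator hΩ.measurableSet]
      exact integral_congr_ae (Filter.Eventually.of_forall fun z => congrFun hFind z)
    rw [h3, finrank_euclideanSpace_fin, hsn, inv_inv, abs_of_nonneg hNpos.le, smul_eq_mul, h4, h5]
  have step5 : (∫ z in Ω, ‖F z‖^2) = ∑ k ∈ Finset.range N, ‖c k‖^2 := by
    have e1 : (∫ z in Ω, ‖F z‖^2) = ∫ z in Ω, (F z * (starRingEnd ℂ) (F z)).re :=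
      integral_congr_ae (Filter.Eventually.of_forall fun z => hre z)
    have e2 : (∫ z in Ω, (F z * (starRingEnd ℂ) (F z)).re)
        = (∫ z in Ω, F z * (starRingEnd ℂ) (F z)).re := integral_re hFFint
    have e3 : (∫ z in Ω, F z * (starRingEnd ℂ) (F z))
        = ∑ k ∈ Finset.range N, c k * (starRingEnd ℂ) (c k) := by
      calc (∫ z in Ω, F z * (starRingEnd ℂ) (F z))
          = ∫ z in Ω, ∑ j ∈ Finset.range N, ∑ k ∈ Finset.range N,
              (c j * (starRingEnd ℂ) (c k)) * (u j z * (starRingEnd ℂ) (u k z)) :=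
            integral_congr_ae (Filter.Eventually.of_forall fun z => hFexp z)
        _ = ∑ j ∈ Finset.range N, ∫ z in Ω, ∑ k ∈ Finset.range N,
              (c j * (starRingEnd ℂ) (c k)) * (u j z * (starRingEnd ℂ) (u k z)) :=
            integral_finset_sum _ (fun j _ =>
              integrable_finset_sum _ fun k _ => (hprod j k).const_mul _)
        _ = ∑ j ∈ Finset.range N, ∑ k ∈ Finset.range N,
              (c j * (starRingEnd ℂ) (c k)) * ∫ z in Ω, u j z * (starRingEnd ℂ) (u k z) := by
            refine Finset.sum_congr rfl fun j _ => ?_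
            rw [integral_finset_sum _ (fun k _ => (hprod j k).const_mul _)]
            exact Finset.sum_congr rfl fun k _ => integral_const_mul _ _
        _ = ∑ j ∈ Finset.range N, ∑ k ∈ Finset.range N,
              (c j * (starRingEnd ℂ) (c k)) * (if j = k then 1 else 0) := by
            refine Finset.sum_congr rfl fun j _ => Finset.sum_congr rfl fun k _ => ?_
            rw [horth j k]
        _ = ∑ k ∈ Finset.range N, c k * (starRingEnd ℂ) (c k) := by
            simp only [mul_ite, mul_one, mul_zero, Finset.sum_ite_eq, Finset.mem_range]
            exact Finset.sum_congr rfl fun k hk => if_pos (Finset.mem_range.1 hk)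
    rw [e1, e2, e3, Complex.re_sum]
    refine Finset.sum_congr rfl fun k _ => ?_
    rw [Complex.mul_conj]; simp [Complex.normSq_eq_norm_sq, ← Complex.ofReal_pow]
  have hck : ∀ k ∈ Finset.range N, ‖c k‖^2
      ≤ ((N:ℝ)⁻¹ * (N:ℝ)⁻¹ * C^(2*m)) * ‖u k x‖^2 := by
    intro k hk
    have h1 : ‖c k‖ = (N:ℝ)⁻¹ * (‖ν k‖^m * ‖u k x‖) := by
      simp only [c]
      rw [norm_mul, norm_mul, norm_inv, norm_pow, RCLike.norm_conj, Complex.norm_natCast]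
      ring
    have h2 : ‖ν k‖^m ≤ C^m := pow_le_pow_left₀ (norm_nonneg _) (hνC k hk) m
    have hC2m : C^(2*m) = (C^m)^2 := by rw [mul_comm, pow_mul]
    calc ‖c k‖^2 = ((N:ℝ)⁻¹*(N:ℝ)⁻¹) * ((‖ν k‖^m)^2 * ‖u k x‖^2) := by rw [h1]; ring
      _ ≤ ((N:ℝ)⁻¹*(N:ℝ)⁻¹) * ((C^m)^2 * ‖u k x‖^2) := by
          have h3 : (‖ν k‖^m)^2 ≤ (C^m)^2 := pow_le_pow_left₀ (by positivity) h2 2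
          exact mul_le_mul_of_nonneg_left
            (mul_le_mul_of_nonneg_right h3 (sq_nonneg ‖u k x‖)) (by positivity)
      _ = ((N:ℝ)⁻¹ * (N:ℝ)⁻¹ * C^(2*m)) * ‖u k x‖^2 := by rw [hC2m]; ring
  calc ∫ y in Metric.ball (0 : EuclideanSpace ℝ (Fin n)) (2*R), ‖(lapC n)^[m] Q y‖^2
      ≤ (N:ℝ) * ∫ z in Ω, ‖F z‖^2 := by rw [step1, ← step3]; exact step2
    _ = (N:ℝ) * ∑ k ∈ Finset.range N, ‖c k‖^2 := by rw [step5]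
    _ ≤ (N:ℝ) * ∑ k ∈ Finset.range N, ((N:ℝ)⁻¹*(N:ℝ)⁻¹*C^(2*m)) * ‖u k x‖^2 :=
        mul_le_mul_of_nonneg_left (Finset.sum_le_sum hck) hNpos.le
    _ = C^(2*m) * ((N:ℝ)⁻¹ * ∑ k ∈ Finset.range N, ‖u k x‖^2) := by
        rw [← Finset.mul_sum]
        field_simp
end

section
/- Let (λ_k) be nondecreasing positive reals with k^{1/n} λ_k^{-1/2} → γ^{-1} as k → ∞ (γ > 0), set h_k = λ_k^{-1/2}. Then for every α ∈ (0, min{1,γ}/2) there exists β > 0 independent of α such that for all sufficiently large N: (i) if k ≥ (1+αβ)N and |N^{-1/n}ξ| ≤ γ+α then |h_k ξ| ≤ 1−α; (ii) if αβN ≤ k ≤ (1−αβ)N and |N^{-1/n}ξ| ≥ γ−α then |h_k ξ| ≥ 1+α. -/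
open Real Filter Topology

/-!
Write `h_k = λ_k^{-1/2}` and `‖ξ‖ = N^{1/n} r`, so that `h_k ‖ξ‖ = (k^{1/n} h_k) · (N/k)^{1/n} · r`.
By Weyl's law the first factor is eventually as close to `γ⁻¹` as we like, uniformly in `k ≥ a N`
once `N` is large. For `k ≥ (1+αβ)N` and `r ≤ γ+α` the product is then at most about
`(1 + α/γ) (1+αβ)^{-1/n}`, and for `k ≤ (1-αβ)N` and `r ≥ γ-α` at least about
`(1 - α/γ) (1-αβ)^{-1/n}`. With `β = 3ⁿ (1 + γ⁻¹)`, the chord bound `(1+x)ⁿ ≤ 1 + x (3ⁿ-1)/2` on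
`[0, 2]` and Bernoulli's inequality put these on the correct sides of `1 - α` and `1 + α`.
-/

lemma one_add_pow_le_chord (n : ℕ) {t x : ℝ} (ht : 0 < t) (hx : 0 ≤ x) (hxt : x ≤ t) :
    (1 + x) ^ n ≤ 1 + x / t * ((1 + t) ^ n - 1) := by
  induction n with
  | zero => simp
  | succ m ih =>
    have hA : 1 ≤ (1 + t) ^ m := one_le_pow₀ (by linarith)
    have hgap : 1 + x / t * ((1 + t) ^ (m + 1) - 1) - (1 + x / t * ((1 + t) ^ m - 1)) * (1 + x)
        = x * ((1 + t) ^ m - 1) * (t - x) / t := by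
      field_simp
      ring
    have hgap_nonneg : 0 ≤ x * ((1 + t) ^ m - 1) * (t - x) / t := by
      apply div_nonneg _ ht.le
      exact mul_nonneg (mul_nonneg hx (by linarith)) (by linarith)
    calc (1 + x) ^ (m + 1) = (1 + x) ^ m * (1 + x) := pow_succ _ _
      _ ≤ (1 + x / t * ((1 + t) ^ m - 1)) * (1 + x) := by gcongr
      _ ≤ 1 + x / t * ((1 + t) ^ (m + 1) - 1) := by linarith

section Margins

variable {α u : ℝ}

lemma pow_div_one_sub_lt (n : ℕ) (hα : 0 < α) (hα1 : α < 1 / 2) (hu : 0 < u)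
    (hαu : α * u < 1 / 2) :
    ((1 + α * u) / (1 - α)) ^ n < 1 + α * (3 ^ n * (1 + u)) := by
  have hαu' : 0 < α * (1 + u) := by positivity
  have hx : (1 + α * u) / (1 - α) ≤ 1 + 2 * (α * (1 + u)) := by
    rw [div_le_iff₀ (by linarith)]
    nlinarith
  have h3 : (1 : ℝ) ≤ 3 ^ n := one_le_pow₀ (by norm_num)
  calc ((1 + α * u) / (1 - α)) ^ n ≤ (1 + 2 * (α * (1 + u))) ^ n :=
        pow_le_pow_left₀ (div_nonneg (by positivity) (by linarith)) hx n
    _ ≤ 1 + 2 * (α * (1 + u)) / 2 * ((1 + 2) ^ n - 1) :=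
        one_add_pow_le_chord n two_pos (by positivity) (by nlinarith)
    _ < 1 + α * (3 ^ n * (1 + u)) := by rw [show (1 : ℝ) + 2 = 3 by norm_num]; nlinarith

lemma lt_pow_div_one_add (n : ℕ) (hα : 0 < α) (hα1 : α < 1 / 2) (hu : 0 < u)
    (hαu : α * u < 1 / 2) :
    1 - α * (3 ^ n * (1 + u)) < ((1 - α * u) / (1 + α)) ^ n := by
  have hb : 1 - α * (1 + u) ≤ (1 - α * u) / (1 + α) := by
    rw [le_div_iff₀ (by linarith)]
    nlinarith [mul_pos (mul_pos hα hα) hu]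
  have h3 : (n : ℝ) < 3 ^ n := by exact_mod_cast Nat.lt_pow_self (by norm_num)
  calc 1 - α * (3 ^ n * (1 + u)) < 1 + n * ((1 - α * (1 + u)) - 1) := by
        nlinarith [mul_pos hα (by linarith : (0 : ℝ) < 1 + u)]
    _ ≤ (1 - α * (1 + u)) ^ n := one_add_mul_sub_le_pow (by nlinarith) n
    _ ≤ ((1 - α * u) / (1 + α)) ^ n := pow_le_pow_left₀ (by nlinarith) hb n

variable {n : ℕ} {γ : ℝ}

lemma inv_mul_add_lt_one_sub_mul_rpow (hn : 0 < n) (hγ : 0 < γ) (hα : 0 < α)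
    (hα1 : α < 1 / 2) (hαγ : α < γ / 2) :
    γ⁻¹ * (γ + α) < (1 - α) * (1 + α * (3 ^ n * (1 + γ⁻¹))) ^ ((1 : ℝ) / n) := by
  have hαu : α * γ⁻¹ < 1 / 2 := by rw [← div_eq_mul_inv, div_lt_iff₀ hγ]; linarith
  have hq : 0 ≤ (1 + α * γ⁻¹) / (1 - α) := div_nonneg (by positivity) (by linarith)
  have hroot : (1 + α * γ⁻¹) / (1 - α) < (1 + α * (3 ^ n * (1 + γ⁻¹))) ^ ((1 : ℝ) / n) := by
    rw [one_div, ← pow_rpow_inv_natCast hq hn.ne']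
    gcongr
    exact pow_div_one_sub_lt n hα hα1 (inv_pos.mpr hγ) hαu
  calc γ⁻¹ * (γ + α) = (1 - α) * ((1 + α * γ⁻¹) / (1 - α)) := by
        field_simp [show 1 - α ≠ 0 by linarith]
    _ < _ := by gcongr; linarith

lemma one_add_mul_rpow_lt_inv_mul_sub (hn : 0 < n) (hγ : 0 < γ) (hα : 0 < α)
    (hα1 : α < 1 / 2) (hαγ : α < γ / 2) (hE : 0 < 1 - α * (3 ^ n * (1 + γ⁻¹))) :
    (1 + α) * (1 - α * (3 ^ n * (1 + γ⁻¹))) ^ ((1 : ℝ) / n) < γ⁻¹ * (γ - α) := by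
  have hαu : α * γ⁻¹ < 1 / 2 := by rw [← div_eq_mul_inv, div_lt_iff₀ hγ]; linarith
  have hq : 0 ≤ (1 - α * γ⁻¹) / (1 + α) := div_nonneg (by linarith) (by linarith)
  have hroot : (1 - α * (3 ^ n * (1 + γ⁻¹))) ^ ((1 : ℝ) / n) < (1 - α * γ⁻¹) / (1 + α) := by
    rw [one_div]
    conv_rhs => rw [← pow_rpow_inv_natCast hq hn.ne']
    gcongr
    exact lt_pow_div_one_add n hα hα1 (inv_pos.mpr hγ) hαu
  calc (1 + α) * (1 - α * (3 ^ n * (1 + γ⁻¹))) ^ ((1 : ℝ) / n)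
      < (1 + α) * ((1 - α * γ⁻¹) / (1 + α)) := by gcongr
    _ = γ⁻¹ * (γ - α) := by field_simp [show 1 + α ≠ 0 by linarith]

end Margins

lemma eventually_forall_of_mul_le {P : ℕ → Prop} (hP : ∀ᶠ k in atTop, P k) {a : ℝ}
    (ha : 0 < a) : ∀ᶠ N : ℕ in atTop, ∀ k : ℕ, a * N ≤ k → P k := by
  obtain ⟨K, hK⟩ := eventually_atTop.mp hP
  filter_upwards [(tendsto_natCast_atTop_atTop.const_mul_atTop ha).eventually_ge_atTop (K : ℝ)]
    with N hN k hk
  exact hK k (by exact_mod_cast hN.trans hk)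

section Scaling

variable {f : ℕ → ℝ} {p c : ℝ}

lemma le_rpow_mul_of_rpow_neg_mul_le {N x R : ℝ} (hN : 0 < N) (h : N ^ (-p) * x ≤ R) :
    x ≤ N ^ p * R := by
  rwa [rpow_neg hN.le, inv_mul_le_iff₀ (rpow_pos_of_pos hN p)] at h

lemma rpow_mul_le_of_le_rpow_neg_mul {N x R : ℝ} (hN : 0 < N) (h : R ≤ N ^ (-p) * x) :
    N ^ p * R ≤ x := by
  rwa [rpow_neg hN.le, le_inv_mul_iff₀ (rpow_pos_of_pos hN p)] at h

lemma eventually_mul_le_of_tendsto_rpow_mul (hp : 0 < p) (hf0 : ∀ k, 0 ≤ f k)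
    (hf : Tendsto (fun k : ℕ => (k : ℝ) ^ p * f k) atTop (𝓝 c)) {D R M : ℝ} (hD : 0 < D)
    (hR : 0 < R) (hc : c * R < M * D ^ p) :
    ∀ᶠ N : ℕ in atTop, ∀ (k : ℕ) (x : ℝ),
      D * N ≤ k → (N : ℝ) ^ (-p) * x ≤ R → f k * x ≤ M := by
  have hc' : c < M * D ^ p / R := by rwa [lt_div_iff₀ hR]
  filter_upwards [eventually_forall_of_mul_le (hf.eventually_lt_const hc') hD,
    eventually_gt_atTop 0] with N hfk hN k x hk hx
  have hN : (0 : ℝ) < N := by exact_mod_cast hN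
  have hNk : D ^ p * (N : ℝ) ^ p ≤ (k : ℝ) ^ p := by
    rw [← mul_rpow hD.le hN.le]
    exact rpow_le_rpow (by positivity) hk hp.le
  refine le_of_mul_le_mul_right ?_ (rpow_pos_of_pos hD p)
  calc f k * x * D ^ p ≤ f k * ((N : ℝ) ^ p * R) * D ^ p := by
        gcongr
        · exact hf0 k
        · exact le_rpow_mul_of_rpow_neg_mul_le hN hx
    _ = R * f k * (D ^ p * (N : ℝ) ^ p) := by ring
    _ ≤ R * f k * (k : ℝ) ^ p := by gcongr; exact mul_nonneg hR.le (hf0 k)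
    _ = R * ((k : ℝ) ^ p * f k) := by ring
    _ ≤ R * (M * D ^ p / R) := by gcongr; exact (hfk k hk).le
    _ = M * D ^ p := by field_simp

-- For `E ≤ 0` the range `a N ≤ k ≤ E N` is empty and `E ^ p` is a junk value.
lemma eventually_le_mul_of_tendsto_rpow_mul (hp : 0 < p) (hf0 : ∀ k, 0 ≤ f k)
    (hf : Tendsto (fun k : ℕ => (k : ℝ) ^ p * f k) atTop (𝓝 c)) {a E R M : ℝ} (ha : 0 < a)
    (hR : 0 < R) (hc : 0 < E → M * E ^ p < c * R) :
    ∀ᶠ N : ℕ in atTop, ∀ (k : ℕ) (x : ℝ),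
      a * N ≤ k → k ≤ E * N → R ≤ (N : ℝ) ^ (-p) * x → M ≤ f k * x := by
  rcases le_or_gt E 0 with hE | hE
  · filter_upwards [eventually_gt_atTop 0] with N hN k x hak hkE
    have hN : (0 : ℝ) < N := by exact_mod_cast hN
    nlinarith [mul_pos ha hN]
  have hc' : M * E ^ p / R < c := by rw [div_lt_iff₀ hR]; exact hc hE
  filter_upwards [eventually_forall_of_mul_le (hf.eventually_const_lt hc') ha,
    eventually_gt_atTop 0] with N hfk hN k x hak hkE hx
  have hN : (0 : ℝ) < N := by exact_mod_cast hN
  have hkN : (k : ℝ) ^ p ≤ E ^ p * (N : ℝ) ^ p := by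
    rw [← mul_rpow hE.le hN.le]
    exact rpow_le_rpow (by positivity) hkE hp.le
  refine le_of_mul_le_mul_right ?_ (rpow_pos_of_pos hE p)
  calc M * E ^ p = R * (M * E ^ p / R) := by field_simp
    _ ≤ R * ((k : ℝ) ^ p * f k) := by gcongr; exact (hfk k hak).le
    _ = f k * (R * (k : ℝ) ^ p) := by ring
    _ ≤ f k * (R * (E ^ p * (N : ℝ) ^ p)) := by gcongr; exact hf0 k
    _ = f k * ((N : ℝ) ^ p * R) * E ^ p := by ring
    _ ≤ f k * x * E ^ p := by
        gcongr
        · exact hf0 k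
        · exact rpow_mul_le_of_le_rpow_neg_mul hN hx

end Scaling

theorem phase_space_separation_general (n : ℕ) (hn : 1 ≤ n) (γ : ℝ) (hγ : 0 < γ)
    (lam : ℕ → ℝ) (hpos : ∀ k, 0 < lam k)
    (hweyl : Tendsto (fun k : ℕ => (k : ℝ) ^ ((1 : ℝ) / n) * lam k ^ (-(1 : ℝ) / 2))
      atTop (nhds γ⁻¹)) :
    ∃ β : ℝ, 0 < β ∧
      ∀ α : ℝ, 0 < α → α < min 1 γ / 2 →
        ∀ᶠ N : ℕ in atTop,
          ∀ (k : ℕ) (ξ : EuclideanSpace ℝ (Fin n)),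
            (((1 + α * β) * N ≤ (k : ℝ)) →
              (N : ℝ) ^ (-(1 : ℝ) / n) * ‖ξ‖ ≤ γ + α →
              lam k ^ (-(1 : ℝ) / 2) * ‖ξ‖ ≤ 1 - α) ∧
            ((α * β * N ≤ (k : ℝ) ∧ (k : ℝ) ≤ (1 - α * β) * N) →
              γ - α ≤ (N : ℝ) ^ (-(1 : ℝ) / n) * ‖ξ‖ →
              1 + α ≤ lam k ^ (-(1 : ℝ) / 2) * ‖ξ‖) := by
  have hp : (0 : ℝ) < 1 / n := one_div_pos.mpr (by exact_mod_cast hn)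
  have hh : ∀ k, 0 ≤ lam k ^ (-(1 : ℝ) / 2) := fun k => (rpow_pos_of_pos (hpos k) _).le
  refine ⟨3 ^ n * (1 + γ⁻¹), by positivity, fun α hα hαγ => ?_⟩
  have hα1 : α < 1 / 2 := by linarith [min_le_left 1 γ]
  have hα2 : α < γ / 2 := by linarith [min_le_right 1 γ]
  have high := eventually_mul_le_of_tendsto_rpow_mul hp hh hweyl (by positivity)
    (by linarith) (inv_mul_add_lt_one_sub_mul_rpow hn hγ hα hα1 hα2)
  have low := eventually_le_mul_of_tendsto_rpow_mul hp hh hweyl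
    (a := α * (3 ^ n * (1 + γ⁻¹))) (by positivity)
    (by linarith) (one_add_mul_rpow_lt_inv_mul_sub hn hγ hα hα1 hα2)
  filter_upwards [high, low] with N hhigh hlow k ξ
  rw [neg_div]
  exact ⟨hhigh k ‖ξ‖, fun hk => hlow k ‖ξ‖ hk.1 hk.2⟩

/-- Phase-space separation: under Weyl's law `k^{1/n} λ_k^{-1/2} → γ⁻¹`, there is `β > 0`
(independent of `α`) such that for all `0 < α < min{1,γ}/2` and all large `N`:
(i) `k ≥ (1+αβ)N` and `|N^{-1/n}ξ| ≤ γ+α` imply `h_k|ξ| ≤ 1−α`;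
(ii) `αβN ≤ k ≤ (1−αβ)N` and `|N^{-1/n}ξ| ≥ γ−α` imply `h_k|ξ| ≥ 1+α`. -/
theorem phase_space_separation (n : ℕ) (hn : 1 ≤ n) (γ : ℝ) (hγ : 0 < γ)
    (lam : ℕ → ℝ) (hmono : Monotone lam) (hpos : ∀ k, 0 < lam k)
    (hweyl : Tendsto (fun k : ℕ => (k : ℝ) ^ ((1 : ℝ) / n) * lam k ^ (-(1 : ℝ) / 2))
      atTop (nhds γ⁻¹)) :
    ∃ β : ℝ, 0 < β ∧
      ∀ α : ℝ, 0 < α → α < min 1 γ / 2 →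
        ∀ᶠ N : ℕ in atTop,
          ∀ (k : ℕ) (ξ : EuclideanSpace ℝ (Fin n)),
            (((1 + α * β) * N ≤ (k : ℝ)) →
              (N : ℝ) ^ (-(1 : ℝ) / n) * ‖ξ‖ ≤ γ + α →
              lam k ^ (-(1 : ℝ) / 2) * ‖ξ‖ ≤ 1 - α) ∧
            ((α * β * N ≤ (k : ℝ) ∧ (k : ℝ) ≤ (1 - α * β) * N) →
              γ - α ≤ (N : ℝ) ^ (-(1 : ℝ) / n) * ‖ξ‖ →
              1 + α ≤ lam k ^ (-(1 : ℝ) / 2) * ‖ξ‖) :=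
  phase_space_separation_general n hn γ hγ lam hpos hweyl
end
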